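/- arXiv:1801.10483 — 2 statements merged into one kernel-verified Lean document; each statement's English description precedes it below -/
import Mathlib

section
/- If a Boolean function f : {0,1}^n → {0,1} is computed by a shuffling two-way deterministic automaton 2DA^Θ_n of size d (for some permutation θ of {1,…,n}), then N(f) ≤ (d+1)^{d+1}. -/
/-! ## Basic machinery for nonuniform two-way automata -/

/-- Head directions: left, stay, right. -/
inductive Dir : Type
  | L | S | R
  deriving DecidableEq

instance : Fintype Dir :=
  ⟨{Dir.L, Dir.S, Dir.R}, fun x => by cases x <;> simp⟩

/-- Move a head position (0-based tape square) in a direction. -/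
def movePos (p : ℕ) : Dir → ℕ
  | Dir.L => p - 1
  | Dir.S => p
  | Dir.R => p + 1

/-- Read the bit of an input of length `n` at (0-based) position `p`
(dummy value `false` out of range; well-formed machines never read out of range). -/
def readBit {n : ℕ} (u : Fin n → Bool) (p : ℕ) : Bool :=
  if h : p < n then u ⟨p, h⟩ else false

/-- A nonuniform head-position-dependent two-way deterministic automaton `2DA_n`
with `d` states, for inputs of length `n`.  The input is on (0-based) squares
`0, …, n-1`; the transition function may differ on each square; the head never
leaves the input; the accepting/rejecting states can only be entered when
reading the rightmost square. -/
structure TwoDA (n d : ℕ) where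
  start : Fin d
  acc : Fin d
  rej : Fin d
  acc_ne_rej : acc ≠ rej
  δ : ℕ → Fin d → Bool → Fin d × Dir
  noLeft : ∀ s b, (δ 0 s b).2 ≠ Dir.L
  noRight : ∀ s b, (δ (n - 1) s b).2 ≠ Dir.R
  haltRight : ∀ i s b, i < n → i ≠ n - 1 → (δ i s b).1 ≠ acc ∧ (δ i s b).1 ≠ rej

namespace TwoDA

variable {n d : ℕ}

/-- One computation step on input `u`; configurations are (state, head position),
and halting configurations are absorbing. -/
def step (M : TwoDA n d) (u : Fin n → Bool) (c : Fin d × ℕ) : Fin d × ℕ :=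
  if c.1 = M.acc ∨ c.1 = M.rej then c
  else ((M.δ c.2 c.1 (readBit u c.2)).1, movePos c.2 (M.δ c.2 c.1 (readBit u c.2)).2)

/-- The machine accepts `u` if the run from the initial configuration reaches the
accepting state. -/
def accepts (M : TwoDA n d) (u : Fin n → Bool) : Prop :=
  ∃ t : ℕ, ((M.step u)^[t] (M.start, 0)).1 = M.acc

def rejects (M : TwoDA n d) (u : Fin n → Bool) : Prop :=
  ∃ t : ℕ, ((M.step u)^[t] (M.start, 0)).1 = M.rej

/-- A `2DA_n` computes `f` if it accepts each `u` with `f u = true` and rejects each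
`u` with `f u = false`. -/
def Computes (M : TwoDA n d) (f : (Fin n → Bool) → Bool) : Prop :=
  ∀ u, (f u = true → M.accepts u) ∧ (f u = false → M.rejects u)

/-- A shuffling automaton `2DA^Θ_n` computes `f`: for some permutation `θ`, the `j`-th
input symbol is placed on square `θ(j)` and the `2DA_n` computes the resulting function. -/
def ComputesShuffled (M : TwoDA n d) (f : (Fin n → Bool) → Bool) : Prop :=
  ∃ θ : Equiv.Perm (Fin n), M.Computes (fun v => f (fun j => v (θ j)))

end TwoDA

/-- The nondeterministic counterpart `2NA_n` of `2DA_n`. -/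
structure TwoNA (n d : ℕ) where
  start : Fin d
  acc : Fin d
  rej : Fin d
  acc_ne_rej : acc ≠ rej
  δ : ℕ → Fin d → Bool → Set (Fin d × Dir)
  noLeft : ∀ s b r, r ∈ δ 0 s b → r.2 ≠ Dir.L
  noRight : ∀ s b r, r ∈ δ (n - 1) s b → r.2 ≠ Dir.R
  haltRight : ∀ i s b r, i < n → i ≠ n - 1 → r ∈ δ i s b → r.1 ≠ acc ∧ r.1 ≠ rej

namespace TwoNA

variable {n d : ℕ}

/-- One nondeterministic step. -/
def stepRel (M : TwoNA n d) (u : Fin n → Bool) (c c' : Fin d × ℕ) : Prop :=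
  c.1 ≠ M.acc ∧ c.1 ≠ M.rej ∧
    ∃ r ∈ M.δ c.2 c.1 (readBit u c.2), c' = (r.1, movePos c.2 r.2)

/-- Acceptance: some computation path reaches the accepting state. -/
def accepts (M : TwoNA n d) (u : Fin n → Bool) : Prop :=
  ∃ p : ℕ, Relation.ReflTransGen (M.stepRel u) (M.start, 0) (M.acc, p)

/-- A `2NA_n` computes `f` if it accepts exactly the inputs `u` with `f u = true`. -/
def Computes (M : TwoNA n d) (f : (Fin n → Bool) → Bool) : Prop :=
  ∀ u, M.accepts u ↔ f u = true

def ComputesShuffled (M : TwoNA n d) (f : (Fin n → Bool) → Bool) : Prop :=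
  ∃ θ : Equiv.Perm (Fin n), M.Computes (fun v => f (fun j => v (θ j)))

end TwoNA

/-- The probabilistic counterpart `2PA_n`: every transition carries a probability, and
from each non-halting configuration the outgoing probabilities sum to `1`. -/
structure TwoPA (n d : ℕ) where
  start : Fin d
  acc : Fin d
  rej : Fin d
  acc_ne_rej : acc ≠ rej
  δ : ℕ → Fin d → Bool → Fin d × Dir → ENNReal
  sum_one : ∀ i s b, ∑ r : Fin d × Dir, δ i s b r = 1
  noLeft : ∀ s b r, δ 0 s b r ≠ 0 → r.2 ≠ Dir.L
  noRight : ∀ s b r, δ (n - 1) s b r ≠ 0 → r.2 ≠ Dir.R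
  haltRight : ∀ i s b r, i < n → i ≠ n - 1 → δ i s b r ≠ 0 → r.1 ≠ acc ∧ r.1 ≠ rej

namespace TwoPA

variable {n d : ℕ}

/-- One-step transition probability of the Markov chain on configurations
(halting configurations are absorbing). -/
noncomputable def transP (M : TwoPA n d) (u : Fin n → Bool) (c c' : Fin d × ℕ) : ENNReal :=
  if c.1 = M.acc ∨ c.1 = M.rej then (if c' = c then 1 else 0)
  else ∑ r : Fin d × Dir,
    if c' = (r.1, movePos c.2 r.2) then M.δ c.2 c.1 (readBit u c.2) r else 0

/-- Distribution over configurations after `t` steps. -/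
noncomputable def dist (M : TwoPA n d) (u : Fin n → Bool) : ℕ → (Fin d × ℕ) → ENNReal
  | 0 => fun c => if c = (M.start, 0) then 1 else 0
  | t + 1 => fun c' => ∑' c : Fin d × ℕ, M.dist u t c * M.transP u c c'

/-- The probability of eventually halting in the accepting state. -/
noncomputable def accProb (M : TwoPA n d) (u : Fin n → Bool) : ENNReal :=
  ⨆ t : ℕ, ∑' p : ℕ, M.dist u t (M.acc, p)

/-- The probability of eventually halting in the rejecting state. -/
noncomputable def rejProb (M : TwoPA n d) (u : Fin n → Bool) : ENNReal :=
  ⨆ t : ℕ, ∑' p : ℕ, M.dist u t (M.rej, p)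

/-- The expected running time (number of steps until halting):
`E[τ] = ∑_t P(τ > t)`. -/
noncomputable def expTime (M : TwoPA n d) (u : Fin n → Bool) : ENNReal :=
  ∑' t : ℕ, (1 - (∑' p : ℕ, M.dist u t (M.acc, p)) - (∑' p : ℕ, M.dist u t (M.rej, p)))

/-- A `2PA_n` computes `f` with error probability `ε`:
members of `f⁻¹(1)` are accepted and members of `f⁻¹(0)` rejected
with probability at least `1/2 + ε`. -/
def Computes (M : TwoPA n d) (f : (Fin n → Bool) → Bool) (ε : ℝ) : Prop :=
  ∀ u, (f u = true → ENNReal.ofReal (1 / 2 + ε) ≤ M.accProb u) ∧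
       (f u = false → ENNReal.ofReal (1 / 2 + ε) ≤ M.rejProb u)

def ComputesShuffled (M : TwoPA n d) (f : (Fin n → Bool) → Bool) (ε : ℝ) : Prop :=
  ∃ θ : Equiv.Perm (Fin n), M.Computes (fun v => f (fun j => v (θ j))) ε

end TwoPA

/-! ## Subfunctions and the complexity measure `N(f)` -/

/-- Assemble a full input from: a permutation `θ` (so that the variable at the `k`-th
position of the order is `x_{θ(k)}`), an assignment `ρ` to the first `i` variables of
the order, and values `γ` for the remaining `n - i` variables. -/
def assembleInput {n : ℕ} (θ : Equiv.Perm (Fin n)) (i : ℕ) (ρ : Fin i → Bool)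
    (γ : Fin (n - i) → Bool) : Fin n → Bool := fun j =>
  if h : (θ.symm j : ℕ) < i then ρ ⟨(θ.symm j : ℕ), h⟩
  else γ ⟨(θ.symm j : ℕ) - i, by have := (θ.symm j).isLt; omega⟩

/-- `N_i^θ(f)`: the number of distinct subfunctions of `f` obtained by fixing the first
`i` variables (in the order given by `θ`). -/
noncomputable def subfunCount (n : ℕ) (f : (Fin n → Bool) → Bool)
    (θ : Equiv.Perm (Fin n)) (i : ℕ) : ℕ :=
  Set.ncard { g : (Fin (n - i) → Bool) → Bool |
    ∃ ρ : Fin i → Bool, g = fun γ => f (assembleInput θ i ρ γ) }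

/-- `N^θ(f) = max_{1 ≤ i ≤ n-1} N_i^θ(f)`. -/
noncomputable def Nperm (n : ℕ) (f : (Fin n → Bool) → Bool) (θ : Equiv.Perm (Fin n)) : ℕ :=
  (Finset.Icc 1 (n - 1)).sup (subfunCount n f θ)

/-- `N(f) = min_θ N^θ(f)`. -/
noncomputable def Nsub (n : ℕ) (f : (Fin n → Bool) → Bool) : ℕ :=
  ⨅ θ : Equiv.Perm (Fin n), Nperm n f θ

/-! ## Languages: the measure `R_n(L)` -/

/-- `R^r(L_n)`: the number of equivalence classes of strings of length `r`, where
`u ∼ v` iff `u·y ∈ L ↔ v·y ∈ L` for all `y` of length `n - r`; counted as the number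
of distinct "extension behaviours". -/
noncomputable def Rr (L : Set (List Bool)) (n r : ℕ) : ℕ :=
  Set.ncard { g : { y : List Bool // y.length = n - r } → Prop |
    ∃ u : List Bool, u.length = r ∧ g = fun y => (u ++ y.1) ∈ L }

/-- `R_n(L) = max_{1 ≤ r ≤ n-1} R^r(L_n)`. -/
noncomputable def Rn (L : Set (List Bool)) (n : ℕ) : ℕ :=
  (Finset.Icc 1 (n - 1)).sup (Rr L n)

/-! ## Uniform two-way automata (2DFA / 2NFA) -/

/-- Tape alphabet of a uniform two-way automaton: end-markers and input bits. -/
inductive TapeSym : Type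
  | lend | rend | bit (b : Bool)
  deriving DecidableEq

/-- The tape of input `w` between end-markers: square `0` holds `⊢`, squares
`1, …, |w|` hold the input, square `|w|+1` holds `⊣`. -/
def tapeSym (w : List Bool) (p : ℕ) : TapeSym :=
  if p = 0 then TapeSym.lend
  else if h : p - 1 < w.length then TapeSym.bit (w.get ⟨p - 1, h⟩) else TapeSym.rend

/-- A uniform two-way deterministic finite automaton (2DFA) with `d` states. -/
structure TwoDFA (d : ℕ) where
  start : Fin d
  acc : Fin d
  rej : Fin d
  acc_ne_rej : acc ≠ rej
  δ : Fin d → TapeSym → Fin d × Dir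

namespace TwoDFA

variable {d : ℕ}

def step (M : TwoDFA d) (w : List Bool) (c : Fin d × ℕ) : Fin d × ℕ :=
  if c.1 = M.acc ∨ c.1 = M.rej then c
  else ((M.δ c.1 (tapeSym w c.2)).1, movePos c.2 (M.δ c.1 (tapeSym w c.2)).2)

def accepts (M : TwoDFA d) (w : List Bool) : Prop :=
  ∃ t : ℕ, ((M.step w)^[t] (M.start, 0)).1 = M.acc

def rejects (M : TwoDFA d) (w : List Bool) : Prop :=
  ∃ t : ℕ, ((M.step w)^[t] (M.start, 0)).1 = M.rej

/-- A 2DFA recognizes `L` if it accepts every member and rejects every non-member. -/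
def Recognizes (M : TwoDFA d) (L : Set (List Bool)) : Prop :=
  ∀ w, (w ∈ L → M.accepts w) ∧ (w ∉ L → M.rejects w)

end TwoDFA

/-- A uniform two-way nondeterministic finite automaton (2NFA) with `d` states. -/
structure TwoNFA (d : ℕ) where
  start : Fin d
  acc : Fin d
  rej : Fin d
  acc_ne_rej : acc ≠ rej
  δ : Fin d → TapeSym → Set (Fin d × Dir)

namespace TwoNFA

variable {d : ℕ}

def stepRel (M : TwoNFA d) (w : List Bool) (c c' : Fin d × ℕ) : Prop :=
  c.1 ≠ M.acc ∧ c.1 ≠ M.rej ∧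
    ∃ r ∈ M.δ c.1 (tapeSym w c.2), c' = (r.1, movePos c.2 r.2)

def accepts (M : TwoNFA d) (w : List Bool) : Prop :=
  ∃ p : ℕ, Relation.ReflTransGen (M.stepRel w) (M.start, 0) (M.acc, p)

/-- A 2NFA recognizes `L` if it accepts exactly the members of `L`. -/
def Recognizes (M : TwoNFA d) (L : Set (List Bool)) : Prop :=
  ∀ w, M.accepts w ↔ w ∈ L

end TwoNFA

/-! ## Size classes -/

/-- A family of Boolean functions, one for each input length. -/
abbrev BoolFamily : Type := (n : ℕ) → (Fin n → Bool) → Bool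

/-- `2DSIZE(d(n))`. -/
def DSIZE (df : ℕ → ℕ) : Set BoolFamily :=
  { f | ∀ n, ∃ dn ≤ df n, ∃ M : TwoDA n dn, M.Computes (f n) }

/-- `2DΘSIZE(d(n))`. -/
def DSIZEΘ (df : ℕ → ℕ) : Set BoolFamily :=
  { f | ∀ n, ∃ dn ≤ df n, ∃ M : TwoDA n dn, M.ComputesShuffled (f n) }

/-- `2NSIZE(d(n))`. -/
def NSIZE (df : ℕ → ℕ) : Set BoolFamily :=
  { f | ∀ n, ∃ dn ≤ df n, ∃ M : TwoNA n dn, M.Computes (f n) }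

/-- `2NΘSIZE(d(n))`. -/
def NSIZEΘ (df : ℕ → ℕ) : Set BoolFamily :=
  { f | ∀ n, ∃ dn ≤ df n, ∃ M : TwoNA n dn, M.ComputesShuffled (f n) }

/-- `2PSIZE(d(n))`, with error bound `ε` and expected running time at most `T` on
every input. -/
def PSIZE (df : ℕ → ℕ) (ε T : ℝ) : Set BoolFamily :=
  { f | ∀ n, ∃ dn ≤ df n, ∃ M : TwoPA n dn,
      M.Computes (f n) ε ∧ ∀ u, M.expTime u ≤ ENNReal.ofReal T }

/-- `2PΘSIZE(d(n))`, with error bound `ε` and expected running time at most `T` on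
every input. -/
def PSIZEΘ (df : ℕ → ℕ) (ε T : ℝ) : Set BoolFamily :=
  { f | ∀ n, ∃ dn ≤ df n, ∃ M : TwoPA n dn,
      M.ComputesShuffled (f n) ε ∧ ∀ u, M.expTime u ≤ ENNReal.ofReal T }

/-- `2DFASIZE(d(n))`: for each length `n`, a 2DFA with at most `d(n)` states decides
membership of the length-`n` strings. -/
def DFASIZE (df : ℕ → ℕ) : Set (Set (List Bool)) :=
  { L | ∀ n, ∃ dn ≤ df n, ∃ M : TwoDFA dn,
      ∀ w : List Bool, w.length = n → ((w ∈ L → M.accepts w) ∧ (w ∉ L → M.rejects w)) }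

/-- `2NFASIZE(d(n))`. -/
def NFASIZE (df : ℕ → ℕ) : Set (Set (List Bool)) :=
  { L | ∀ n, ∃ dn ≤ df n, ∃ M : TwoNFA dn,
      ∀ w : List Bool, w.length = n → (M.accepts w ↔ w ∈ L) }
/-! ## The shuffled address function `2-SAF_t` and its uniform version -/

namespace SAF

/-- Number of variables in each of the `2t` blocks. -/
def q (n t : ℕ) : ℕ := n / (2 * t)

/-- Number of address variables per block: `⌈log₂ 2t⌉`. -/
def c (t : ℕ) : ℕ := Nat.clog 2 (2 * t)

/-- Number of value variables per block. -/
def b (n t : ℕ) : ℕ := q n t - c t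

/-- Given the per-block address function `Adr` and per-block value function `BVal`,
`Ind` finds the minimal block whose address is `a`, and `mkVal a` is the value of
that block (or `none` if no block has address `a`). -/
def mkVal (t : ℕ) (Adr BVal : ℕ → ℕ) (a : ℕ) : Option ℕ :=
  ((List.range (2 * t)).find? (fun p => Adr p == a)).map BVal

/-- The two-round iteration of the address function:
`Step_2(X,-1) = 2`; `Step_1(X,i) = Val(X, Step_2(X,i-1)) + t`;
`Step_2(X,i) = Val(X, Step_1(X,i))`; result `1` iff `Step_2(X,1) > 0`
(`none`, representing `-1`, gives result `0`). -/
def iterate (t : ℕ) (Val : ℕ → Option ℕ) : Bool :=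
  match ((((Val 2).map (· + t)).bind Val).bind (fun a => (Val a).map (· + t))).bind Val with
  | some v => decide (0 < v)
  | none => false

/-- `Adr(X,p) = (∑_{j<c} y^p_j 2^j) mod 2t`, where the address variables of block `p`
are the first `c` variables of the block. -/
def Adr (n t : ℕ) (X : Fin n → Bool) (p : ℕ) : ℕ :=
  (∑ j ∈ Finset.range (c t), (if readBit X (p * q n t + j) then 2 ^ j else 0)) % (2 * t)

/-- The value of block `p`: the number of `1`s among its value variables, mod `t`. -/
def blockVal (n t : ℕ) (X : Fin n → Bool) (p : ℕ) : ℕ :=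
  (∑ j ∈ Finset.range (b n t), (if readBit X (p * q n t + c t + j) then 1 else 0)) % t

/-- `Val(X,a)`: value of the first block with address `a` (`none` meaning `-1`). -/
def Val (n t : ℕ) (X : Fin n → Bool) : ℕ → Option ℕ :=
  mkVal t (Adr n t X) (blockVal n t X)

end SAF

/-- The Boolean function `2-SAF_t` on `n` variables. -/
def SAFfun (n t : ℕ) (X : Fin n → Bool) : Bool :=
  SAF.iterate t (SAF.Val n t X)

/-- The set of value variables of block `p` (for the `2-SAF_t` layout) inside a set
`A` of variables. -/
def SAF.valueVarsIn (n t : ℕ) (p : ℕ) (A : Finset (Fin n)) : Finset (Fin n) :=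
  A.filter (fun x => p * q n t + c t ≤ (x : ℕ) ∧ (x : ℕ) < p * q n t + q n t)

/-- The blocks from which `A` contains at least `t` value variables. -/
def SAF.heavyBlocks (n t : ℕ) (A : Finset (Fin n)) : Finset ℕ :=
  (Finset.range (2 * t)).filter (fun p => t ≤ (valueVarsIn n t p A).card)

namespace USAF

/-- The data (non-mark) bits of block `p`, as (mark, data) pairs: within a block the
variables in odd (1-based) positions are mark bits, each followed by a data bit. -/
def dataPairs (n t : ℕ) (X : Fin n → Bool) (p : ℕ) : List (Bool × Bool) :=
  (List.range (SAF.q n t / 2)).map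
    (fun j => (readBit X (p * SAF.q n t + 2 * j), readBit X (p * SAF.q n t + 2 * j + 1)))

/-- The address bits of block `p`: data bits whose mark bit is `0`, in order. -/
def addrBits (n t : ℕ) (X : Fin n → Bool) (p : ℕ) : List Bool :=
  ((dataPairs n t X p).filter (fun pr => pr.1 == false)).map Prod.snd

/-- The value bits of block `p`: data bits whose mark bit is `1`, in order. -/
def valBits (n t : ℕ) (X : Fin n → Bool) (p : ℕ) : List Bool :=
  ((dataPairs n t X p).filter (fun pr => pr.1 == true)).map Prod.snd

/-- `Adr(X,p) = (∑_{j<c} y^p_j 2^{c-j-1}) mod 2t`, over the first `c` address bits. -/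
def Adr (n t : ℕ) (X : Fin n → Bool) (p : ℕ) : ℕ :=
  (∑ j ∈ Finset.range (SAF.c t),
      (if (addrBits n t X p).getD j false then 2 ^ (SAF.c t - j - 1) else 0)) % (2 * t)

/-- The value of block `p`: the number of `1`s among its value bits, mod `t`. -/
def blockVal (n t : ℕ) (X : Fin n → Bool) (p : ℕ) : ℕ :=
  ((valBits n t X p).count true) % t

def Val (n t : ℕ) (X : Fin n → Bool) : ℕ → Option ℕ :=
  SAF.mkVal t (Adr n t X) (blockVal n t X)

end USAF

/-- The Boolean function `2-USAF_t` on `n` variables. -/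
def USAFfun (n t : ℕ) (X : Fin n → Bool) : Bool :=
  SAF.iterate t (USAF.Val n t X)

/-- The language `2-USAF-L_t`: all binary strings `u` with `2-USAF_t(u) = 1`. -/
def USAFlang (t : ℕ) : Set (List Bool) :=
  { w : List Bool | USAFfun w.length t (fun i => w.get i) = true }

/-! ## The equality function -/

/-- `EQ(X) = 1` iff `x_i = x_{i + ⌊n/2⌋}` for every `0 ≤ i < ⌊n/2⌋`. -/
def EQfun (n : ℕ) (x : Fin n → Bool) : Bool :=
  decide (∀ i : ℕ, (h : i < n / 2) → x ⟨i, by omega⟩ = x ⟨i + n / 2, by omega⟩)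

/-! Cut the tape between squares `i - 1` and `i`. All that a deterministic run can learn from the
prefix (squares `< i`) is summarized by its crossing behaviour: the state in which the run from the
initial configuration first reaches square `i`, and, for each state `s`, the state in which the run
entering square `i - 1` in state `s` comes back to square `i` (each possibly `none`). Since the
machine halts only on the last square, it never halts inside the prefix, so two prefixes with the
same behaviour are accepted together with every suffix. Hence `N_i` is at most the number of
behaviours, `(d + 1) * (d + 1) ^ d`, once the variables are ordered by their tape squares. -/

theorem Set.ncard_range_le_of_factorsThrough {α β γ : Type*} [Finite γ] {g : α → β} {b : α → γ}
    (h : g.FactorsThrough b) : (Set.range g).ncard ≤ Nat.card γ := by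
  rcases isEmpty_or_nonempty α with hα | ⟨⟨a⟩⟩
  · simp [Set.range_eq_empty]
  calc (Set.range g).ncard ≤ (Set.range (Function.extend b g fun _ => g a)).ncard :=
        Set.ncard_le_ncard (Set.range_subset_iff.2 fun x => ⟨b x, h.extend_apply _ x⟩)
          (Set.finite_range _)
    _ ≤ Nat.card γ := Finite.card_range_le _

theorem movePos_le (p : ℕ) (δ : Dir) : movePos p δ ≤ p + 1 := by
  cases δ <;> simp only [movePos] <;> omega

theorem le_movePos (p : ℕ) (δ : Dir) : p ≤ movePos p δ + 1 := by
  cases δ <;> simp only [movePos] <;> omega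

namespace TwoDA

variable {n d : ℕ} (M : TwoDA n d) {u u' : Fin n → Bool} {i : ℕ} {c : Fin d × ℕ}

def AcceptsFrom (u : Fin n → Bool) (c : Fin d × ℕ) : Prop :=
  ∃ t, ((M.step u)^[t] c).1 = M.acc

theorem iterate_step_of_halting (h : c.1 = M.acc ∨ c.1 = M.rej) (u : Fin n → Bool) (t : ℕ) :
    (M.step u)^[t] c = c :=
  Function.iterate_fixed (f := M.step u) (if_pos h) t

theorem step_congr (h : readBit u c.2 = readBit u' c.2) : M.step u c = M.step u' c := by
  simp only [step, h]

theorem pos_step_le (u : Fin n → Bool) (c : Fin d × ℕ) : (M.step u c).2 ≤ c.2 + 1 := by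
  unfold step
  split
  · omega
  · exact movePos_le _ _

theorem pos_le_step (u : Fin n → Bool) (c : Fin d × ℕ) : c.2 ≤ (M.step u c).2 + 1 := by
  unfold step
  split
  · omega
  · exact le_movePos _ _

theorem not_accepts_and_rejects (u : Fin n → Bool) : ¬ (M.accepts u ∧ M.rejects u) := by
  rintro ⟨⟨t, ht⟩, ⟨t', ht'⟩⟩
  have h₁ := M.iterate_step_of_halting (Or.inl ht) u t'
  have h₂ := M.iterate_step_of_halting (Or.inr ht') u t
  rw [← Function.iterate_add_apply] at h₁ h₂
  rw [add_comm, h₂] at h₁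
  exact M.acc_ne_rej (ht.symm.trans (congrArg Prod.fst h₁).symm |>.trans ht')

theorem Computes.accepts_iff {M : TwoDA n d} {g : (Fin n → Bool) → Bool} (h : M.Computes g)
    (u : Fin n → Bool) : M.accepts u ↔ g u = true := by
  refine ⟨fun hacc => ?_, (h u).1⟩
  by_contra hg
  exact M.not_accepts_and_rejects u ⟨hacc, (h u).2 (Bool.eq_false_iff.2 hg)⟩

theorem iterate_step_congr (hpre : ∀ p < i, readBit u p = readBit u' p) {t : ℕ}
    (hlt : ∀ t' < t, ((M.step u)^[t'] c).2 < i) : (M.step u)^[t] c = (M.step u')^[t] c := by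
  induction t with
  | zero => rfl
  | succ t ih =>
    have heq := ih fun t' ht' => hlt t' (ht'.trans t.lt_succ_self)
    rw [Function.iterate_succ_apply', Function.iterate_succ_apply', ← heq]
    exact M.step_congr (hpre _ (hlt t t.lt_succ_self))

theorem iterate_not_halting (hin : i ≤ n - 1) (hc : c.1 ≠ M.acc ∧ c.1 ≠ M.rej) {t : ℕ}
    (hlt : ∀ t' < t, ((M.step u)^[t'] c).2 < i) :
    ((M.step u)^[t] c).1 ≠ M.acc ∧ ((M.step u)^[t] c).1 ≠ M.rej := by
  induction t with
  | zero => exact hc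
  | succ t ih =>
    have hhalt := ih fun t' ht' => hlt t' (ht'.trans t.lt_succ_self)
    have hpos := hlt t t.lt_succ_self
    rw [Function.iterate_succ_apply', step, if_neg (by tauto)]
    exact M.haltRight _ _ _ (by omega) (by omega)

open Classical in
noncomputable def exitState (u : Fin n → Bool) (i : ℕ) (c : Fin d × ℕ) : Option (Fin d) :=
  if h : ∃ t, i ≤ ((M.step u)^[t] c).2 then some ((M.step u)^[Nat.find h] c).1 else none

theorem exitState_eq_of_first {t : ℕ} (ht : i ≤ ((M.step u)^[t] c).2)
    (hlt : ∀ t' < t, ((M.step u)^[t'] c).2 < i) :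
    M.exitState u i c = some ((M.step u)^[t] c).1 := by
  have h : ∃ t, i ≤ ((M.step u)^[t] c).2 := ⟨t, ht⟩
  have hfind : Nat.find h = t := (Nat.find_eq_iff h).2 ⟨ht, fun t' ht' => (hlt t' ht').not_ge⟩
  rw [exitState, dif_pos h, hfind]

theorem pos_eq_of_first (hc : c.2 < i) {t : ℕ} (ht : i ≤ ((M.step u)^[t] c).2)
    (hlt : ∀ t' < t, ((M.step u)^[t'] c).2 < i) : ((M.step u)^[t] c).2 = i := by
  cases t with
  | zero => exact absurd ht (not_le.2 hc)
  | succ t =>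
    have hstep := M.pos_step_le u ((M.step u)^[t] c)
    have hprev := hlt t t.lt_succ_self
    rw [Function.iterate_succ_apply'] at ht ⊢
    omega

theorem exists_iterate_eq_of_exitState_eq_some (hc : c.2 < i) {s : Fin d}
    (h : M.exitState u i c = some s) : ∃ t, (M.step u)^[t] c = (s, i) := by
  rw [exitState] at h
  split_ifs at h with hex
  refine ⟨Nat.find hex, Prod.ext (Option.some.inj h) ?_⟩
  exact M.pos_eq_of_first hc (Nat.find_spec hex) fun t' ht' => not_le.1 (Nat.find_min hex ht')

theorem exitState_congr_of_exists (hpre : ∀ p < i, readBit u p = readBit u' p)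
    (h : ∃ t, i ≤ ((M.step u)^[t] c).2) : M.exitState u i c = M.exitState u' i c := by
  have hlt : ∀ t' < Nat.find h, ((M.step u)^[t'] c).2 < i := fun t' ht' =>
    not_le.1 (Nat.find_min h ht')
  have heq : ∀ t ≤ Nat.find h, (M.step u)^[t] c = (M.step u')^[t] c := fun t ht =>
    M.iterate_step_congr hpre fun t' ht' => hlt t' (ht'.trans_le ht)
  rw [M.exitState_eq_of_first (Nat.find_spec h) hlt, heq _ le_rfl]
  refine (M.exitState_eq_of_first ?_ fun t' ht' => ?_).symm
  · rw [← heq _ le_rfl]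
    exact Nat.find_spec h
  · rw [← heq t' ht'.le]
    exact hlt t' ht'

theorem exitState_congr (hpre : ∀ p < i, readBit u p = readBit u' p) :
    M.exitState u i c = M.exitState u' i c := by
  by_cases h : ∃ t, i ≤ ((M.step u)^[t] c).2
  · exact M.exitState_congr_of_exists hpre h
  by_cases h' : ∃ t, i ≤ ((M.step u')^[t] c).2
  · exact (M.exitState_congr_of_exists (fun p hp => (hpre p hp).symm) h').symm
  rw [exitState, exitState, dif_neg h, dif_neg h']

theorem exists_exit_of_iterate_eq_acc (hin : i ≤ n - 1) (hc : c.2 < i)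
    (hhalt : c.1 ≠ M.acc ∧ c.1 ≠ M.rej) {T : ℕ} (hT : ((M.step u)^[T] c).1 = M.acc) :
    ∃ t ≤ T, 0 < t ∧ ((M.step u)^[t] c).2 = i ∧
      M.exitState u i c = some ((M.step u)^[t] c).1 := by
  obtain ⟨t₁, ht₁T, ht₁⟩ : ∃ t ≤ T, i ≤ ((M.step u)^[t] c).2 := by
    by_contra! h
    exact (M.iterate_not_halting hin hhalt fun t' ht' => h t' ht'.le).1 hT
  have hex : ∃ t, i ≤ ((M.step u)^[t] c).2 := ⟨t₁, ht₁⟩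
  have hlt : ∀ t' < Nat.find hex, ((M.step u)^[t'] c).2 < i := fun t' ht' =>
    not_le.1 (Nat.find_min hex ht')
  exact ⟨Nat.find hex, (Nat.find_le (h := hex) ht₁).trans ht₁T, (Nat.find_pos hex).2 (not_le.2 hc),
    M.pos_eq_of_first hc (Nat.find_spec hex) hlt, M.exitState_eq_of_first (Nat.find_spec hex) hlt⟩

theorem acceptsFrom_of_exitState_eq (hin : i ≤ n - 1)
    (hsuf : ∀ p, i ≤ p → readBit u p = readBit u' p) {S : Set (Fin d × ℕ)}
    (hS : ∀ s, (s, i - 1) ∈ S) (hexit : ∀ c ∈ S, M.exitState u i c = M.exitState u' i c)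
    (hc : i ≤ c.2 ∨ c ∈ S) (h : M.AcceptsFrom u c) : M.AcceptsFrom u' c := by
  obtain ⟨T, hT⟩ := h
  -- Induction on the acceptance time: steps on the suffix are the same for both tapes, and an
  -- accepting run that enters the prefix must come back to square `i`, in the same state for `u'`.
  induction T using Nat.strong_induction_on generalizing c with
  | _ T ih =>
  by_cases hacc : c.1 = M.acc
  · exact ⟨0, hacc⟩
  have hrej : c.1 ≠ M.rej := fun hrej => by
    rw [M.iterate_step_of_halting (Or.inr hrej)] at hT
    exact hacc hT
  rcases lt_or_ge c.2 i with hleft | hright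
  · obtain ⟨t₀, ht₀T, ht₀, hpos, hexit₀⟩ :=
      M.exists_exit_of_iterate_eq_acc hin hleft ⟨hacc, hrej⟩ hT
    obtain ⟨t', ht'⟩ := M.exists_iterate_eq_of_exitState_eq_some hleft
      ((hexit c (hc.resolve_left hleft.not_ge)).symm.trans hexit₀)
    have he : (M.step u')^[t'] c = (M.step u)^[t₀] c := ht'.trans (Prod.ext rfl hpos.symm)
    obtain ⟨t₂, ht₂⟩ := ih (T - t₀) (by omega) (Or.inl hpos.ge)
      (by rwa [← Function.iterate_add_apply, Nat.sub_add_cancel ht₀T])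
    exact ⟨t₂ + t', by rwa [Function.iterate_add_apply, he]⟩
  · obtain _ | T := T
    · exact absurd hT hacc
    have hnext : i ≤ (M.step u c).2 ∨ M.step u c ∈ S := by
      refine (le_or_gt i (M.step u c).2).imp id fun h => ?_
      have hback := M.pos_le_step u c
      rw [show M.step u c = ((M.step u c).1, i - 1) from Prod.ext rfl (by omega)]
      exact hS _
    obtain ⟨t, ht⟩ := ih T T.lt_succ_self hnext hT
    exact ⟨t + 1, by rwa [Function.iterate_succ_apply, M.step_congr (hsuf c.2 hright).symm]⟩

theorem accepts_iff_of_exitState_eq (hin : i ≤ n - 1)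
    (hsuf : ∀ p, i ≤ p → readBit u p = readBit u' p)
    (hstart : M.exitState u i (M.start, 0) = M.exitState u' i (M.start, 0))
    (hentry : ∀ s, M.exitState u i (s, i - 1) = M.exitState u' i (s, i - 1)) :
    M.accepts u ↔ M.accepts u' := by
  let S : Set (Fin d × ℕ) := {c | c = (M.start, 0) ∨ c.2 = i - 1}
  have hS : ∀ s, (s, i - 1) ∈ S := fun _ => Or.inr rfl
  have hexit : ∀ c ∈ S, M.exitState u i c = M.exitState u' i c := by
    rintro c (rfl | hc)
    · exact hstart
    · rw [show c = (c.1, i - 1) from Prod.ext rfl hc]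
      exact hentry _
  exact ⟨M.acceptsFrom_of_exitState_eq hin hsuf hS hexit (Or.inr (Or.inl rfl)),
    M.acceptsFrom_of_exitState_eq hin (fun p hp => (hsuf p hp).symm) hS
      (fun c hc => (hexit c hc).symm) (Or.inr (Or.inl rfl))⟩

end TwoDA

def joinTape {n i : ℕ} (ρ : Fin i → Bool) (γ : Fin (n - i) → Bool) : Fin n → Bool := fun s =>
  if h : (s : ℕ) < i then ρ ⟨s, h⟩ else γ ⟨s - i, by have := s.isLt; omega⟩

theorem assembleInput_symm {n i : ℕ} (θ : Equiv.Perm (Fin n)) (ρ : Fin i → Bool)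
    (γ : Fin (n - i) → Bool) : assembleInput θ.symm i ρ γ = fun j => joinTape ρ γ (θ j) := by
  funext j
  simp [joinTape, assembleInput]

theorem readBit_joinTape_of_lt {n i p : ℕ} (hin : i ≤ n) (hp : p < i) (ρ : Fin i → Bool)
    (γ γ' : Fin (n - i) → Bool) : readBit (joinTape ρ γ) p = readBit (joinTape ρ γ') p := by
  simp [readBit, joinTape, hp, hp.trans_le hin]

theorem readBit_joinTape_of_ge {n i p : ℕ} (hp : i ≤ p) (ρ ρ' : Fin i → Bool)
    (γ : Fin (n - i) → Bool) : readBit (joinTape ρ γ) p = readBit (joinTape ρ' γ) p := by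
  by_cases hpn : p < n
  · simp [readBit, joinTape, hpn, not_lt.2 hp]
  · simp [readBit, hpn]

namespace TwoDA

variable {n d : ℕ} (M : TwoDA n d) {i : ℕ}

noncomputable def crossingBehaviour (i : ℕ) (ρ : Fin i → Bool) :
    Option (Fin d) × (Fin d → Option (Fin d)) :=
  let u : Fin n → Bool := joinTape ρ fun _ => false
  (M.exitState u i (M.start, 0), fun s => M.exitState u i (s, i - 1))

theorem accepts_joinTape_congr (hin : i ≤ n - 1) {ρ ρ' : Fin i → Bool}
    (h : M.crossingBehaviour i ρ = M.crossingBehaviour i ρ') (γ : Fin (n - i) → Bool) :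
    M.accepts (joinTape ρ γ) ↔ M.accepts (joinTape ρ' γ) := by
  have hprefix : ∀ (ρ : Fin i → Bool) c, M.exitState (joinTape ρ γ) i c =
      M.exitState (joinTape (n := n) ρ fun _ => false) i c := fun ρ _ =>
    M.exitState_congr fun p hp => readBit_joinTape_of_lt (by omega) hp ρ γ _
  refine M.accepts_iff_of_exitState_eq hin (fun p hp => readBit_joinTape_of_ge hp ρ ρ' γ) ?_
    fun s => ?_
  · rw [hprefix, hprefix]
    exact congrArg Prod.fst h
  · rw [hprefix, hprefix]
    exact congrFun (congrArg Prod.snd h) s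

theorem subfunCount_symm_le {θ : Equiv.Perm (Fin n)} {f : (Fin n → Bool) → Bool}
    (hθ : M.Computes fun v => f fun j => v (θ j)) (hin : i ≤ n - 1) :
    subfunCount n f θ.symm i ≤ (d + 1) ^ (d + 1) := by
  have hsub : ∀ ρ γ, f (assembleInput θ.symm i ρ γ) = true ↔ M.accepts (joinTape ρ γ) :=
    fun ρ γ => by rw [hθ.accepts_iff, assembleInput_symm]
  have hfactor : Function.FactorsThrough (fun ρ γ => f (assembleInput θ.symm i ρ γ))
      (M.crossingBehaviour i) := fun ρ ρ' h => funext fun γ =>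
    Bool.eq_iff_iff.2 ((hsub ρ γ).trans ((M.accepts_joinTape_congr hin h γ).trans (hsub ρ' γ).symm))
  calc subfunCount n f θ.symm i
      = (Set.range fun ρ γ => f (assembleInput θ.symm i ρ γ)).ncard := by
        simp only [subfunCount, Set.range, eq_comm]
    _ ≤ Nat.card (Option (Fin d) × (Fin d → Option (Fin d))) :=
        Set.ncard_range_le_of_factorsThrough hfactor
    _ = (d + 1) ^ (d + 1) := by simp [Nat.card_eq_fintype_card, pow_succ, mul_comm]

end TwoDA

theorem stmt0 (n d : ℕ) (f : (Fin n → Bool) → Bool) (M : TwoDA n d)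
    (hM : M.ComputesShuffled f) :
    Nsub n f ≤ (d + 1) ^ (d + 1) := by
  obtain ⟨θ, hθ⟩ := hM
  refine (ciInf_le (OrderBot.bddBelow _) θ.symm).trans (Finset.sup_le fun i hi => ?_)
  exact M.subfunCount_symm_le hθ (Finset.mem_Icc.1 hi).2
end

section
/- If a language L ⊆ {0,1}* is recognized by a 2DFA of size d, then for every n, R_n(L) ≤ (d+1)^{d+1}. -/
/-!
The run of a 2DFA on `u ++ y` alternates between excursions inside `⊢u` and excursions to the
right of `u`. An excursion inside `⊢u` begins at the start configuration or when the head steps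
from the first square of `y` back onto the last square of `u`, in some state `s`, and its outcome
is determined by `u` alone: the state in which the head first reaches the first square of `y` or
the machine halts, or the fact that this never happens. Hence the verdict on every `u ++ y` depends
on `u` only through `|u|` and the crossing table recording this outcome for the start
configuration and for each of the `d` re-entry states, and there are only `(d + 1) ^ (d + 1)` such
tables.
-/

lemma movePos_le_succ (p : ℕ) (dir : Dir) : movePos p dir ≤ p + 1 := by
  cases dir <;> simp only [movePos] <;> omega

lemma pred_le_movePos (p : ℕ) (dir : Dir) : p - 1 ≤ movePos p dir := by
  cases dir <;> simp only [movePos] <;> omega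

lemma tapeSym_append_of_le {u : List Bool} (y : List Bool) {p : ℕ} (hp : p ≤ u.length) :
    tapeSym (u ++ y) p = tapeSym u p := by
  unfold tapeSym
  rcases Nat.eq_zero_or_pos p with rfl | hp0
  · rfl
  · have hu : p - 1 < u.length := by omega
    have huy : p - 1 < (u ++ y).length := by simp only [List.length_append]; omega
    rw [if_neg (by omega), if_neg (by omega), dif_pos hu, dif_pos huy]
    simp [List.getElem_append_left hu]

lemma tapeSym_append_of_lt {u : List Bool} (y : List Bool) {p : ℕ} (hp : u.length < p) :
    tapeSym (u ++ y) p = tapeSym y (p - u.length) := by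
  unfold tapeSym
  rw [if_neg (by omega), if_neg (by omega)]
  by_cases hy : p - u.length - 1 < y.length
  · have huy : p - 1 < (u ++ y).length := by simp only [List.length_append]; omega
    rw [dif_pos huy, dif_pos hy]
    simp only [List.get_eq_getElem, List.getElem_append_right (show u.length ≤ p - 1 by omega)]
    congr 2
    omega
  · have huy : ¬ p - 1 < (u ++ y).length := by simp only [List.length_append]; omega
    rw [dif_neg huy, dif_neg hy]

lemma Set.ncard_image_le_natCard_of_factors {α β γ : Type*} [Finite γ] {A : Set α}
    {f : α → β} (g : α → γ) (hfg : ∀ a ∈ A, ∀ b ∈ A, g a = g b → f a = f b) :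
    (f '' A).ncard ≤ Nat.card γ := by
  cases isEmpty_or_nonempty α
  · simp [Set.eq_empty_of_isEmpty A]
  rw [← Set.ncard_univ]
  refine Set.ncard_le_ncard_of_injOn (g ∘ f.invFunOn A) (fun _ _ => Set.mem_univ _) ?_
  rintro _ ⟨a, ha, rfl⟩ _ ⟨b, hb, rfl⟩ hab
  obtain ⟨ha', hfa⟩ := Function.invFunOn_pos (f := f) ⟨a, ha, rfl⟩
  obtain ⟨hb', hfb⟩ := Function.invFunOn_pos (f := f) ⟨b, hb, rfl⟩
  rw [← hfa, ← hfb]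
  exact hfg _ ha' _ hb' hab

namespace TwoDFA

variable {d : ℕ} (M : TwoDFA d)

def AcceptsFrom (w : List Bool) (c : Fin d × ℕ) : Prop :=
  ∃ t : ℕ, ((M.step w)^[t] c).1 = M.acc

/-- Square `r + 1` is the first one to the right of a prefix of length `r`, as `⊢` is on
square `0`. -/
def IsExit (r : ℕ) (c : Fin d × ℕ) : Prop :=
  c.2 = r + 1 ∨ c.1 = M.acc ∨ c.1 = M.rej

noncomputable def exitState (u : List Bool) (c : Fin d × ℕ) : Option (Fin d) :=
  open Classical in
  if h : ∃ t, M.IsExit u.length ((M.step u)^[t] c)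
  then some ((M.step u)^[Nat.find h] c).1 else none

/-- `(s, u.length)` is the configuration just after re-entering `u` from the right in state `s`. -/
noncomputable def crossingTable (u : List Bool) : Option (Fin d) × (Fin d → Option (Fin d)) :=
  (M.exitState u (M.start, 0), fun s => M.exitState u (s, u.length))

variable {M}

lemma step_of_halted {w : List Bool} {c : Fin d × ℕ} (h : c.1 = M.acc ∨ c.1 = M.rej) :
    M.step w c = c :=
  if_pos h

lemma step_of_not_halted {w : List Bool} {c : Fin d × ℕ} (h : ¬ (c.1 = M.acc ∨ c.1 = M.rej)) :
    M.step w c = ((M.δ c.1 (tapeSym w c.2)).1, movePos c.2 (M.δ c.1 (tapeSym w c.2)).2) :=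
  if_neg h

lemma iterate_step_of_halted {w : List Bool} {c : Fin d × ℕ} (h : c.1 = M.acc ∨ c.1 = M.rej)
    (t : ℕ) : (M.step w)^[t] c = c :=
  Function.iterate_fixed (step_of_halted h) t

lemma iterate_step_eq_of_halted {w : List Bool} {c : Fin d × ℕ} {t t' : ℕ}
    (h : ((M.step w)^[t] c).1 = M.acc ∨ ((M.step w)^[t] c).1 = M.rej) (htt' : t ≤ t') :
    (M.step w)^[t'] c = (M.step w)^[t] c := by
  rw [← Nat.sub_add_cancel htt', Function.iterate_add_apply, iterate_step_of_halted h]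

lemma step_snd_le (w : List Bool) (c : Fin d × ℕ) : (M.step w c).2 ≤ c.2 + 1 := by
  by_cases h : c.1 = M.acc ∨ c.1 = M.rej
  · rw [step_of_halted h]; omega
  · rw [step_of_not_halted h]; exact movePos_le_succ _ _

lemma pred_le_step_snd (w : List Bool) (c : Fin d × ℕ) : c.2 - 1 ≤ (M.step w c).2 := by
  by_cases h : c.1 = M.acc ∨ c.1 = M.rej
  · rw [step_of_halted h]; omega
  · rw [step_of_not_halted h]; exact pred_le_movePos _ _

lemma step_append_of_le {u : List Bool} (y : List Bool) {c : Fin d × ℕ} (hc : c.2 ≤ u.length) :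
    M.step (u ++ y) c = M.step u c := by
  unfold step
  rw [tapeSym_append_of_le y hc]

lemma step_append_congr {u v : List Bool} (hlen : u.length = v.length) (y : List Bool)
    {c : Fin d × ℕ} (hc : u.length < c.2) : M.step (u ++ y) c = M.step (v ++ y) c := by
  unfold step
  rw [tapeSym_append_of_lt y hc, tapeSym_append_of_lt y (hlen ▸ hc), hlen]

lemma not_rejects_of_accepts {w : List Bool} (h : M.accepts w) : ¬ M.rejects w := by
  rintro ⟨t', ht'⟩
  obtain ⟨t, ht⟩ := h
  rcases Nat.le_total t t' with htt' | htt'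
  · rw [iterate_step_eq_of_halted (Or.inl ht) htt', ht] at ht'
    exact M.acc_ne_rej ht'
  · rw [iterate_step_eq_of_halted (Or.inr ht') htt', ht'] at ht
    exact M.acc_ne_rej ht.symm

lemma mem_iff_accepts {L : Set (List Bool)} (hM : M.Recognizes L) (w : List Bool) :
    w ∈ L ↔ M.accepts w :=
  ⟨(hM w).1, fun hacc => by_contra fun hw => not_rejects_of_accepts hacc ((hM w).2 hw)⟩

lemma acceptsFrom_of_iterate {w : List Bool} {c : Fin d × ℕ} {m : ℕ}
    (h : M.AcceptsFrom w ((M.step w)^[m] c)) : M.AcceptsFrom w c := by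
  obtain ⟨t, ht⟩ := h
  exact ⟨t + m, by rwa [Function.iterate_add_apply]⟩

lemma iterate_step_append_of_not_isExit {u : List Bool} (y : List Bool) {c : Fin d × ℕ}
    (hc : c.2 ≤ u.length) {t : ℕ} (h : ∀ k < t, ¬ M.IsExit u.length ((M.step u)^[k] c)) :
    (M.step (u ++ y))^[t] c = (M.step u)^[t] c := by
  have hpos : ∀ k < t, ((M.step u)^[k] c).2 ≤ u.length := by
    intro k hk
    induction k with
    | zero => exact hc
    | succ k ih =>
      have hstep := M.step_snd_le u ((M.step u)^[k] c)
      have hne : ((M.step u)^[k + 1] c).2 ≠ u.length + 1 := fun he => h (k + 1) hk (Or.inl he)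
      rw [Function.iterate_succ_apply'] at hne ⊢
      have := ih (by omega)
      omega
  suffices ∀ k ≤ t, (M.step (u ++ y))^[k] c = (M.step u)^[k] c from this t le_rfl
  intro k hk
  induction k with
  | zero => rfl
  | succ k ih =>
    rw [Function.iterate_succ_apply', Function.iterate_succ_apply', ih (by omega),
      step_append_of_le y (hpos k (by omega))]

lemma exists_first_exit_of_exitState_eq_some {u : List Bool} (y : List Bool) {c : Fin d × ℕ}
    (hc : c.2 ≤ u.length) {s : Fin d} (h : M.exitState u c = some s) :
    ∃ m, ((M.step (u ++ y))^[m] c).1 = s ∧ M.IsExit u.length ((M.step (u ++ y))^[m] c) ∧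
      ∀ k < m, ¬ M.IsExit u.length ((M.step (u ++ y))^[k] c) := by
  classical
  unfold exitState at h
  split_ifs at h with hex
  have hmin : ∀ k < Nat.find hex, ¬ M.IsExit u.length ((M.step u)^[k] c) :=
    fun k hk => Nat.find_min hex hk
  refine ⟨Nat.find hex, ?_, ?_, fun k hk => ?_⟩
  · rw [iterate_step_append_of_not_isExit y hc hmin]
    exact Option.some.inj h
  · rw [iterate_step_append_of_not_isExit y hc hmin]
    exact Nat.find_spec hex
  · rw [iterate_step_append_of_not_isExit y hc (fun j hj => hmin j (hj.trans hk))]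
    exact hmin k hk

lemma not_isExit_of_exitState_eq_none {u : List Bool} (y : List Bool) {c : Fin d × ℕ}
    (hc : c.2 ≤ u.length) (h : M.exitState u c = none) (t : ℕ) :
    ¬ M.IsExit u.length ((M.step (u ++ y))^[t] c) := by
  classical
  unfold exitState at h
  split_ifs at h with hex
  push Not at hex
  rw [iterate_step_append_of_not_isExit y hc (fun k _ => hex k)]
  exact hex t

def Corresponds (u v : List Bool) (c c' : Fin d × ℕ) : Prop :=
  (u.length < c.2 ∧ c = c') ∨
    (c.2 ≤ u.length ∧ c'.2 ≤ v.length ∧ M.exitState u c = M.exitState v c')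

lemma corresponds_step_of_lt {u v : List Bool} (hlen : u.length = v.length)
    (hreentry : ∀ s, M.exitState u (s, u.length) = M.exitState v (s, v.length)) (y : List Bool)
    {c : Fin d × ℕ} (hc : u.length < c.2) :
    M.Corresponds u v (M.step (u ++ y) c) (M.step (u ++ y) c) := by
  rcases (show u.length ≤ (M.step (u ++ y) c).2 by
    have := M.pred_le_step_snd (u ++ y) c; omega).lt_or_eq with hlt | heq
  · exact Or.inl ⟨hlt, rfl⟩
  · refine Or.inr ⟨heq.ge, hlen ▸ heq.ge, ?_⟩
    rw [← Prod.mk.eta (p := M.step (u ++ y) c), ← heq, hreentry, ← hlen]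

lemma acceptsFrom_of_corresponds {u v : List Bool} (hlen : u.length = v.length)
    (hreentry : ∀ s, M.exitState u (s, u.length) = M.exitState v (s, v.length)) (y : List Bool)
    {c c' : Fin d × ℕ} (hcc : M.Corresponds u v c c') (h : M.AcceptsFrom (u ++ y) c) :
    M.AcceptsFrom (v ++ y) c' := by
  obtain ⟨t, ht⟩ := h
  induction t using Nat.strong_induction_on generalizing c c' with | _ t ih => ?_
  rcases hcc with ⟨hc, rfl⟩ | ⟨hc, hc', hexit⟩
  · by_cases hhalt : c.1 = M.acc ∨ c.1 = M.rej
    · rw [iterate_step_of_halted hhalt] at ht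
      exact ⟨0, ht⟩
    cases t with
    | zero => exact (hhalt (Or.inl ht)).elim
    | succ t =>
      rw [Function.iterate_succ_apply] at ht
      have := ih t (by omega) (corresponds_step_of_lt hlen hreentry y hc) ht
      rw [step_append_congr hlen y hc] at this
      exact acceptsFrom_of_iterate (m := 1) this
  cases hs : M.exitState u c with
  | none => exact absurd (Or.inr (Or.inl ht)) (not_isExit_of_exitState_eq_none y hc hs t)
  | some s =>
    obtain ⟨m, hm, hexit_m, hmin⟩ := exists_first_exit_of_exitState_eq_some y hc hs
    obtain ⟨m', hm', hexit_m', -⟩ := exists_first_exit_of_exitState_eq_some y hc' (hexit ▸ hs)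
    have hmt : m ≤ t := not_lt.1 fun hlt => hmin t hlt (Or.inr (Or.inl ht))
    refine acceptsFrom_of_iterate (m := m') ?_
    by_cases hhalt : s = M.acc ∨ s = M.rej
    · rw [iterate_step_eq_of_halted (hm ▸ hhalt) hmt, hm] at ht
      exact ⟨0, hm'.trans ht⟩
    -- both runs first leave their prefixes in the configuration `(s, |u| + 1)`
    have hpos : ((M.step (u ++ y))^[m] c).2 = u.length + 1 :=
      hexit_m.resolve_right (hm ▸ hhalt)
    have hpos' : ((M.step (v ++ y))^[m'] c').2 = v.length + 1 :=
      hexit_m'.resolve_right (hm' ▸ hhalt)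
    have hm0 : m ≠ 0 := by
      rintro rfl
      rw [Function.iterate_zero_apply] at hpos
      omega
    rw [Prod.ext (hm'.trans hm.symm) (by omega : _ = ((M.step (u ++ y))^[m] c).2)]
    rw [← Nat.sub_add_cancel hmt, Function.iterate_add_apply] at ht
    exact ih (t - m) (by omega) (Or.inl ⟨by omega, rfl⟩) ht

theorem accepts_append_iff_of_crossingTable_eq {u v : List Bool} (hlen : u.length = v.length)
    (htable : M.crossingTable u = M.crossingTable v) (y : List Bool) :
    M.accepts (u ++ y) ↔ M.accepts (v ++ y) := by
  obtain ⟨hstart, hreentry⟩ := Prod.ext_iff.1 htable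
  have hreentry : ∀ s, M.exitState u (s, u.length) = M.exitState v (s, v.length) :=
    congrFun hreentry
  exact ⟨acceptsFrom_of_corresponds hlen hreentry y
      (Or.inr ⟨Nat.zero_le _, Nat.zero_le _, hstart⟩),
    acceptsFrom_of_corresponds hlen.symm (fun s => (hreentry s).symm) y
      (Or.inr ⟨Nat.zero_le _, Nat.zero_le _, hstart.symm⟩)⟩

theorem Rr_le_of_recognizes {L : Set (List Bool)} (hM : M.Recognizes L) (n r : ℕ) :
    Rr L n r ≤ (d + 1) ^ (d + 1) := by
  have hbehaviour : { g : { y : List Bool // y.length = n - r } → Prop |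
      ∃ u : List Bool, u.length = r ∧ g = fun y => (u ++ y.1) ∈ L } =
      (fun u => fun y : { y : List Bool // y.length = n - r } => (u ++ y.1) ∈ L) ''
        { u | u.length = r } := by
    ext g
    simp [eq_comm]
  calc Rr L n r ≤ Nat.card (Option (Fin d) × (Fin d → Option (Fin d))) := by
        rw [Rr, hbehaviour]
        refine Set.ncard_image_le_natCard_of_factors M.crossingTable fun u hu v hv htable => ?_
        funext y
        rw [mem_iff_accepts hM, mem_iff_accepts hM]
        exact propext (accepts_append_iff_of_crossingTable_eq (hu.trans hv.symm) htable y.1)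
    _ = (d + 1) ^ (d + 1) := by simp [Nat.card_eq_fintype_card, pow_succ, mul_comm]

end TwoDFA

theorem stmt1 (d : ℕ) (L : Set (List Bool)) (M : TwoDFA d) (hM : M.Recognizes L) :
    ∀ n : ℕ, Rn L n ≤ (d + 1) ^ (d + 1) :=
  fun n => Finset.sup_le fun r _ => M.Rr_le_of_recognizes hM n r
end
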